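/- arXiv:1309.1050 — 2 statements merged into one kernel-verified Lean document; each statement's English description precedes it below -/
import Mathlib

section
/- Let n ≥ 4 be an integer and define u, w : ℝ → ℝ by u(t) = (1+(n−3)t⁴)⁻¹ and w(t) = 1+2t⁴+2t⁸. Define S(t) = 2/u(t)² − (4·u''(t)/u(t) + 2(n−3)·w''(t)/w(t)) − 2·u'(t)²/u(t)² − (n−3)(n−4)·w'(t)²/w(t)² − 4(n−3)·u'(t)w'(t)/(u(t)w(t)). Then S(0) = 2 and there exists δ > 0 such that S(t) ≥ 2 for all t with |t| < δ. -/
/-!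
With `v = 1/u = 1 + (n-3)t⁴`, the scalar curvature is a rational function of `t` whose Taylor
expansion at `0` starts `2 + 4(n-3)t⁴`: the `t²` terms coming from `u''` and `w''` cancel. So
`S t - 2 = t⁴ (4(n-3) + t² R t)` with `R` continuous, and the bracket stays positive near `0`.
-/

open Filter Topology

/-- Scalar curvature of `u(t)² g₁ + w(t)² g₂ + dt²`, where `g₁`, `g₂` have dimensions `p`, `q` and
constant scalar curvatures `S₁`, `S₂`. -/
noncomputable def doublyWarpedScalarCurvature (p q S₁ S₂ : ℝ) (u w : ℝ → ℝ) (t : ℝ) : ℝ :=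
  S₁ / u t ^ 2 + S₂ / w t ^ 2
    - 2 * p * deriv (deriv u) t / u t - 2 * q * deriv (deriv w) t / w t
    - p * (p - 1) * deriv u t ^ 2 / u t ^ 2 - q * (q - 1) * deriv w t ^ 2 / w t ^ 2
    - 2 * p * q * (deriv u t * deriv w t) / (u t * w t)

lemma hasDerivAt_inv_one_add_mul_pow_four {a : ℝ} (ha : 0 ≤ a) (t : ℝ) :
    HasDerivAt (fun s => (1 + a * s ^ 4)⁻¹) (-(4 * a * t ^ 3) / (1 + a * t ^ 4) ^ 2) t := by
  refine ((((hasDerivAt_pow 4 t).const_mul a).const_add 1).fun_inv (by positivity)).congr_deriv ?_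
  norm_num
  ring

lemma deriv_inv_one_add_mul_pow_four {a : ℝ} (ha : 0 ≤ a) :
    deriv (fun s => (1 + a * s ^ 4)⁻¹) = fun t => -(4 * a * t ^ 3) / (1 + a * t ^ 4) ^ 2 :=
  funext fun t => (hasDerivAt_inv_one_add_mul_pow_four ha t).deriv

lemma deriv_deriv_inv_one_add_mul_pow_four {a : ℝ} (ha : 0 ≤ a) (t : ℝ) :
    deriv (deriv fun s => (1 + a * s ^ 4)⁻¹) t
      = (20 * a ^ 2 * t ^ 6 - 12 * a * t ^ 2) / (1 + a * t ^ 4) ^ 3 := by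
  have hv : 1 + a * t ^ 4 ≠ 0 := by positivity
  have h : HasDerivAt (fun s => -(4 * a * s ^ 3) / (1 + a * s ^ 4) ^ 2)
      ((20 * a ^ 2 * t ^ 6 - 12 * a * t ^ 2) / (1 + a * t ^ 4) ^ 3) t := by
    refine ((((hasDerivAt_pow 3 t).const_mul (4 * a)).fun_neg).fun_div
      ((((hasDerivAt_pow 4 t).const_mul a).const_add 1).fun_pow 2)
      (pow_ne_zero 2 hv)).congr_deriv ?_
    field_simp
    ring
  rw [deriv_inv_one_add_mul_pow_four ha, h.deriv]

lemma hasDerivAt_one_add_two_mul_pow_four_add_two_mul_pow_eight (t : ℝ) :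
    HasDerivAt (fun s : ℝ => 1 + 2 * s ^ 4 + 2 * s ^ 8) (8 * t ^ 3 + 16 * t ^ 7) t := by
  refine ((((hasDerivAt_pow 4 t).const_mul 2).const_add 1).fun_add
    ((hasDerivAt_pow 8 t).const_mul 2)).congr_deriv ?_
  norm_num
  ring

lemma deriv_deriv_one_add_two_mul_pow_four_add_two_mul_pow_eight (t : ℝ) :
    deriv (deriv fun s : ℝ => 1 + 2 * s ^ 4 + 2 * s ^ 8) t = 24 * t ^ 2 + 112 * t ^ 6 := by
  have h : HasDerivAt (fun s : ℝ => 8 * s ^ 3 + 16 * s ^ 7) (24 * t ^ 2 + 112 * t ^ 6) t := by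
    refine (((hasDerivAt_pow 3 t).const_mul 8).fun_add
      ((hasDerivAt_pow 7 t).const_mul 16)).congr_deriv ?_
    norm_num
    ring
  rw [funext fun s => (hasDerivAt_one_add_two_mul_pow_four_add_two_mul_pow_eight s).deriv, h.deriv]

noncomputable def scalarCurvatureRemainder (a t : ℝ) : ℝ :=
  2 * a ^ 2 * t ^ 2
    + (48 * a * (2 - a + 2 * t ^ 4) + 128 * a ^ 2 * (1 + 2 * t ^ 4))
      / ((1 + a * t ^ 4) * (1 + 2 * t ^ 4 + 2 * t ^ 8))
    - 224 * a / (1 + 2 * t ^ 4 + 2 * t ^ 8) - 160 * a ^ 2 / (1 + a * t ^ 4) ^ 2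
    - 64 * a * (a - 1) * (1 + 2 * t ^ 4) ^ 2 / (1 + 2 * t ^ 4 + 2 * t ^ 8) ^ 2

lemma continuous_scalarCurvatureRemainder {a : ℝ} (ha : 0 ≤ a) :
    Continuous (scalarCurvatureRemainder a) := by
  unfold scalarCurvatureRemainder
  fun_prop (disch := intro; positivity)

lemma doublyWarpedScalarCurvature_eq {a : ℝ} (ha : 0 ≤ a) (t : ℝ) :
    doublyWarpedScalarCurvature 2 a 2 0 (fun s => (1 + a * s ^ 4)⁻¹)
      (fun s => 1 + 2 * s ^ 4 + 2 * s ^ 8) t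
      = 2 + t ^ 4 * (4 * a + t ^ 2 * scalarCurvatureRemainder a t) := by
  have hv : 1 + a * t ^ 4 ≠ 0 := by positivity
  have hw : 1 + 2 * t ^ 4 + 2 * t ^ 8 ≠ 0 := by positivity
  rw [doublyWarpedScalarCurvature, scalarCurvatureRemainder,
    deriv_deriv_inv_one_add_mul_pow_four ha, deriv_inv_one_add_mul_pow_four ha,
    deriv_deriv_one_add_two_mul_pow_four_add_two_mul_pow_eight,
    (hasDerivAt_one_add_two_mul_pow_four_add_two_mul_pow_eight t).deriv]
  field_simp
  ring

/-- Scalar curvature lower bound in Case 1 (`S₀ = 2`) of Proposition 6: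
with `u(t) = (1+(n-3)t⁴)⁻¹` and `w(t) = 1+2t⁴+2t⁸`, the scalar curvature expression
`S(t)` satisfies `S(0) = 2` and `S(t) ≥ 2` near `t = 0`. -/
theorem scalar_curvature_case1
    (n : ℕ) (hn : 4 ≤ n) (u w S : ℝ → ℝ)
    (hu : u = fun t => (1 + ((n : ℝ) - 3) * t ^ 4)⁻¹)
    (hw : w = fun t => 1 + 2 * t ^ 4 + 2 * t ^ 8)
    (hS : S = fun t =>
      2 / (u t) ^ 2
        - (4 * deriv (deriv u) t / u t + 2 * ((n : ℝ) - 3) * deriv (deriv w) t / w t)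
        - 2 * (deriv u t) ^ 2 / (u t) ^ 2
        - ((n : ℝ) - 3) * ((n : ℝ) - 4) * (deriv w t) ^ 2 / (w t) ^ 2
        - 4 * ((n : ℝ) - 3) * (deriv u t * deriv w t) / (u t * w t)) :
    S 0 = 2 ∧ ∃ δ > (0 : ℝ), ∀ t : ℝ, |t| < δ → 2 ≤ S t := by
  set a : ℝ := (n : ℝ) - 3 with ha_def
  have ha : 0 < a := by
    have : (4 : ℝ) ≤ n := by exact_mod_cast hn
    linarith
  have hS_eq (t : ℝ) : S t = 2 + t ^ 4 * (4 * a + t ^ 2 * scalarCurvatureRemainder a t) := by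
    rw [← doublyWarpedScalarCurvature_eq ha.le, hS, hu, hw, doublyWarpedScalarCurvature, ha_def]
    ring
  refine ⟨by simp [hS_eq], ?_⟩
  have hcont : Continuous fun t => 4 * a + t ^ 2 * scalarCurvatureRemainder a t := by
    have := continuous_scalarCurvatureRemainder ha.le
    fun_prop
  obtain ⟨δ, hδ, hpos⟩ := Metric.eventually_nhds_iff.mp <|
    continuousAt_const.eventually_lt (f := fun _ => (0 : ℝ)) hcont.continuousAt (x₀ := 0)
      (by simpa using ha)
  refine ⟨δ, hδ, fun t ht => ?_⟩
  rw [hS_eq]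
  have hbracket := hpos (show dist t 0 < δ by simpa using ht)
  exact le_add_of_nonneg_right (mul_nonneg (by positivity) hbracket.le)
end

section
/- Let n ≥ 5 be an integer and define u, w : ℝ → ℝ by u(t) = 1+2t⁴+2t⁸ and w(t) = (1+(n−3)t⁴)⁻¹. Then for every real t > 0, (n−3)·u'(t)/u(t) + 2·w'(t)/w(t) > 0. -/
/-!
Both warping functions have elementary logarithmic derivatives, and clearing denominators gives
`H(t) = 8 c t⁷ (c + 2 (c - 1) t⁴) / ((1 + 2t⁴ + 2t⁸)(1 + c t⁴))` with `c = n - 3`,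
which is positive for `t > 0` as soon as `c ≥ 1`.
-/

theorem logDeriv_fun_inv {𝕜 : Type*} [NontriviallyNormedField 𝕜] {f : 𝕜 → 𝕜} {f' x : 𝕜}
    (hf : HasDerivAt f f' x) (hx : f x ≠ 0) :
    logDeriv (fun y => (f y)⁻¹) x = -(f' / f x) := by
  rw [logDeriv_apply, (hf.fun_inv hx).deriv]
  field_simp

namespace WarpedProduct

noncomputable section

def u (t : ℝ) : ℝ := 1 + 2 * t ^ 4 + 2 * t ^ 8

def w (c t : ℝ) : ℝ := (1 + c * t ^ 4)⁻¹

/-- The paper's `H(t) = (n-3) u'/u + 2 w'/w`, with `c = n - 3`. -/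
def meanCurvature (c t : ℝ) : ℝ := c * logDeriv u t + 2 * logDeriv (w c) t

theorem u_pos (t : ℝ) : 0 < u t := by
  unfold u; positivity

theorem hasDerivAt_u (t : ℝ) : HasDerivAt u (8 * t ^ 3 + 16 * t ^ 7) t := by
  refine ((((hasDerivAt_pow 4 t).const_mul 2).const_add 1).fun_add
    ((hasDerivAt_pow 8 t).const_mul 2)).congr_deriv ?_
  norm_num
  ring

theorem hasDerivAt_one_add_mul_pow_four (c t : ℝ) :
    HasDerivAt (fun x : ℝ => 1 + c * x ^ 4) (4 * c * t ^ 3) t := by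
  refine (((hasDerivAt_pow 4 t).const_mul c).const_add 1).congr_deriv ?_
  norm_num
  ring

theorem logDeriv_u (t : ℝ) : logDeriv u t = (8 * t ^ 3 + 16 * t ^ 7) / u t := by
  rw [logDeriv_apply, (hasDerivAt_u t).deriv]

theorem logDeriv_w {c t : ℝ} (h : 1 + c * t ^ 4 ≠ 0) :
    logDeriv (w c) t = -(4 * c * t ^ 3 / (1 + c * t ^ 4)) :=
  logDeriv_fun_inv (hasDerivAt_one_add_mul_pow_four c t) h

theorem meanCurvature_eq {c t : ℝ} (h : 1 + c * t ^ 4 ≠ 0) :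
    meanCurvature c t = 8 * c * t ^ 7 * (c + 2 * (c - 1) * t ^ 4) / (u t * (1 + c * t ^ 4)) := by
  have hu : u t ≠ 0 := (u_pos t).ne'
  rw [meanCurvature, logDeriv_u, logDeriv_w h]
  field_simp
  unfold u
  ring

theorem meanCurvature_pos {c t : ℝ} (hc : 1 ≤ c) (ht : 0 < t) : 0 < meanCurvature c t := by
  have hc₀ : 0 < c := by linarith
  have hc₁ : 0 ≤ c - 1 := by linarith
  rw [meanCurvature_eq (by positivity)]
  have := u_pos t
  positivity

end

end WarpedProduct

open WarpedProduct in
/-- Mean curvature positivity in Case 3 of Proposition 6: with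
`u(t) = 1+2t⁴+2t⁸` and `w(t) = (1+(n-3)t⁴)⁻¹`, for every `t > 0`,
`(n-3)u'/u + 2w'/w > 0`. -/
theorem mean_curvature_positive_case3
    (n : ℕ) (hn : 5 ≤ n) (u w : ℝ → ℝ)
    (hu : u = fun t => 1 + 2 * t ^ 4 + 2 * t ^ 8)
    (hw : w = fun t => (1 + ((n : ℝ) - 3) * t ^ 4)⁻¹)
    (t : ℝ) (ht : 0 < t) :
    0 < ((n : ℝ) - 3) * deriv u t / u t + 2 * deriv w t / w t := by
  subst hu hw
  have hc : (1 : ℝ) ≤ n - 3 := by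
    have : (5 : ℝ) ≤ n := by exact_mod_cast hn
    linarith
  rw [mul_div_assoc, mul_div_assoc]
  exact meanCurvature_pos hc ht
end
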